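/- arXiv:1808.09097 — 3 statements merged into one kernel-verified Lean document; each statement's English description precedes it below -/
import Mathlib

section
/- Let G be a connected graph and P_r a path on r vertices, and let S be an isometric path cover of P_r □ G. If there exists some layer index j₀ ∈ {1,...,r} such that no path in S contains any edge of the copy G^{j₀} of G at level j₀, then |S| ≥ |V(G)|. -/
open SimpleGraph

/-- `s` is the vertex set of an isometric (shortest) path in `G`. -/
def IsIsoPathSet {V : Type*} (G : SimpleGraph V) (s : Set V) : Prop :=
  ∃ (u v : V) (p : G.Walk u v), p.IsPath ∧ p.length = G.dist u v ∧ s = {x | x ∈ p.support}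

/-- The isometric path cover number. -/
noncomputable def ipCover {V : Type*} (G : SimpleGraph V) : ℕ :=
  sInf {n | ∃ f : Fin n → Set V, (∀ i, IsIsoPathSet G (f i)) ∧ (⋃ i, f i) = Set.univ}

/-- The isometric path partition number. -/
noncomputable def ipPartition {V : Type*} (G : SimpleGraph V) : ℕ :=
  sInf {n | ∃ f : Fin n → Set V, (∀ i, IsIsoPathSet G (f i)) ∧ (⋃ i, f i) = Set.univ ∧
    Pairwise (Function.onFun Disjoint f)}

/-!
Two vertices `(j₀, v) ≠ (j₀, w)` of the layer `G^{j₀}` are at distance `d_G(v, w)` in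
`P_r □ G`. Steps along `P_r` do not move the `G`-coordinate, so a walk between them that uses
such a step is longer than `d_G(v, w)`; in particular its first edge cannot leave the layer.
Since a subpath of an isometric path is isometric, an isometric path without `G^{j₀}`-edges
meets the layer in at most one vertex, and covering the `|V(G)|` vertices of the layer takes at
least `|V(G)|` paths.
-/

namespace SimpleGraph

variable {V α β : Type*} {G : SimpleGraph α} {H : SimpleGraph β}

lemma dist_boxProd_of_fst_eq {x y : α × β} (hxy : x.1 = y.1) :
    (G □ H).dist x y = H.dist x.2 y.2 := by
  simp [dist, edist_boxProd, hxy]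

namespace Walk

lemma exists_isSubwalk_of_mem_support {K : SimpleGraph V} {u v x y : V} {p : K.Walk u v}
    (hx : x ∈ p.support) (hy : y ∈ p.support) :
    (∃ q : K.Walk x y, q.IsSubwalk p) ∨ ∃ q : K.Walk y x, q.IsSubwalk p := by
  classical
  have hy' : y ∈ (p.takeUntil x hx).support ∨ y ∈ (p.dropUntil x hx).support := by
    rwa [← mem_support_append_iff, take_spec]
  rcases hy' with hy' | hy'
  · exact .inr ⟨_, (isSubwalk_dropUntil _ hy').trans (isSubwalk_takeUntil p hx)⟩
  · exact .inl ⟨_, (isSubwalk_takeUntil _ hy').trans (isSubwalk_dropUntil p hx)⟩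

lemma dist_snd_le_length {x y : α × β} (q : (G □ H).Walk x y) : H.dist x.2 y.2 ≤ q.length := by
  classical
  have := length_boxProd q
  exact (dist_le q.ofBoxProdRight).trans (by omega)

lemma dist_snd_lt_length_of_fst_ne {x y : α × β} (q : (G □ H).Walk x y) {d : (G □ H).Dart}
    (hd : d ∈ q.darts) (hne : d.fst.1 ≠ d.snd.1) : H.dist x.2 y.2 < q.length := by
  induction q with
  | nil => simp at hd
  | @cons x z y h q ih =>
    rw [darts_cons, List.mem_cons] at hd
    rw [length_cons]
    rcases boxProd_adj.mp h with ⟨-, hsnd⟩ | ⟨hadj, hfst⟩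
    · have := q.dist_snd_le_length
      rw [hsnd]
      omega
    · have hfirst : d ≠ ⟨(x, z), h⟩ := by rintro rfl; exact hne hfst
      have htri := hadj.reachable.dist_triangle_left y.2
      rw [dist_eq_one_iff_adj.mpr hadj] at htri
      have := ih (hd.resolve_left hfirst)
      omega

lemma exists_dart_fst_eq_of_length_le_dist {a : α} {v w : β} (hvw : v ≠ w)
    (q : (G □ H).Walk (a, v) (a, w)) (hq : q.length ≤ H.dist v w) :
    ∃ d ∈ q.darts, d.fst.1 = a ∧ d.snd.1 = a := by
  cases q with
  | nil => exact absurd rfl hvw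
  | cons h q =>
    refine ⟨⟨_, h⟩, List.mem_cons_self, rfl, ?_⟩
    by_contra hne
    exact (dist_snd_lt_length_of_fst_ne _ List.mem_cons_self (Ne.symm hne)).not_ge hq

lemma exists_dart_fst_eq_of_length_eq_dist {x y : α × β} {p : (G □ H).Walk x y}
    (hp : p.length = (G □ H).dist x y) {a : α} {v w : β} (hv : (a, v) ∈ p.support)
    (hw : (a, w) ∈ p.support) (hvw : v ≠ w) :
    ∃ d ∈ p.darts, d.fst.1 = a ∧ d.snd.1 = a := by
  have key : ∀ {v w : β}, v ≠ w → ∀ q : (G □ H).Walk (a, v) (a, w), q.IsSubwalk p →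
      ∃ d ∈ p.darts, d.fst.1 = a ∧ d.snd.1 = a := by
    intro v w hvw q hq
    have hlen := length_eq_dist_of_subwalk hp hq
    rw [dist_boxProd_of_fst_eq (x := (a, v)) (y := (a, w)) rfl] at hlen
    obtain ⟨d, hd, hda⟩ := exists_dart_fst_eq_of_length_le_dist hvw q hlen.le
    exact ⟨d, hq.darts_subset hd, hda⟩
  rcases exists_isSubwalk_of_mem_support hv hw with ⟨q, hq⟩ | ⟨q, hq⟩
  · exact key hvw q hq
  · exact key hvw.symm q hq

end Walk

end SimpleGraph

theorem stmt_7_general {V : Type*} [Fintype V] (G : SimpleGraph V) (r n : ℕ)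
    (f : Fin n → Σ (u : Fin r × V) (v : Fin r × V), (pathGraph r □ G).Walk u v)
    (hiso : ∀ i, ((f i).2.2).length = (pathGraph r □ G).dist (f i).1 (f i).2.1)
    (hcov : ∀ x : Fin r × V, ∃ i, x ∈ ((f i).2.2).support)
    (j₀ : Fin r)
    (hlayer : ∀ i, ∀ d ∈ ((f i).2.2).darts,
      ¬(d.toProd.1.1 = j₀ ∧ d.toProd.2.1 = j₀)) :
    Fintype.card V ≤ n := by
  choose F hF using fun v : V => hcov (j₀, v)
  have hF_inj : Function.Injective F := by
    intro v w hvw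
    by_contra hne
    have hw : (j₀, w) ∈ (f (F v)).2.2.support := hvw ▸ hF w
    obtain ⟨d, hd, hdj⟩ := Walk.exists_dart_fst_eq_of_length_eq_dist (hiso (F v)) (hF v) hw hne
    exact hlayer _ d hd hdj
  simpa using Fintype.card_le_of_injective F hF_inj

theorem stmt_7 {V : Type*} [Fintype V] (G : SimpleGraph V) (hG : G.Connected) (r n : ℕ)
    (f : Fin n → Σ (u : Fin r × V) (v : Fin r × V), (pathGraph r □ G).Walk u v)
    (hpath : ∀ i, ((f i).2.2).IsPath)
    (hiso : ∀ i, ((f i).2.2).length = (pathGraph r □ G).dist (f i).1 (f i).2.1)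
    (hcov : ∀ x : Fin r × V, ∃ i, x ∈ ((f i).2.2).support)
    (j₀ : Fin r)
    (hlayer : ∀ i, ∀ d ∈ ((f i).2.2).darts,
      ¬(d.toProd.1.1 = j₀ ∧ d.toProd.2.1 = j₀)) :
    Fintype.card V ≤ n :=
  stmt_7_general G r n f hiso hcov j₀ hlayer
end

section
/- For the r-dimensional grid Ξ(d₁, d₂, ..., d_r) = P_{d₁} □ P_{d₂} □ ⋯ □ P_{d_r} with d₁ ≥ ((d₂−1)+(d₃−1)+⋯+(d_r−1))·(d₂d₃⋯d_r), both the isometric path cover number and the isometric path partition number equal d₂d₃⋯d_r. -/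
open SimpleGraph

/-- The multi-dimensional grid: the Cartesian (box) product of the path graphs
`pathGraph (d 0), ..., pathGraph (d (k-1))`. -/
def gridGraph {k : ℕ} (d : Fin k → ℕ) : SimpleGraph (∀ i, Fin (d i)) where
  Adj a b := ∃ i, (pathGraph (d i)).Adj (a i) (b i) ∧ ∀ j, j ≠ i → a j = b j
  symm := by
    constructor
    rintro a b ⟨i, hadj, heq⟩
    exact ⟨i, hadj.symm, fun j hj => (heq j hj).symm⟩
  loopless := by
    constructor
    rintro a ⟨i, hadj, -⟩
    exact (pathGraph (d i)).loopless.irrefl _ hadj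

/-! The lines parallel to the first axis are isometric paths, and the `d₂ ⋯ d_r` of them
partition the grid. Conversely, an isometric path has at most `diam + 1 = d₁ + S` vertices,
where `S = Σ (dᵢ - 1)` over `i ≥ 2`, so a cover by `n` isometric paths gives
`d₁ · d₂ ⋯ d_r ≤ n (d₁ + S)`. Since `S · d₂ ⋯ d_r ≤ d₁`, this forces `n ≥ d₂ ⋯ d_r`. -/

namespace SimpleGraph

variable {V : Type*} (G : SimpleGraph V)

def IsIsoPathCover {n : ℕ} (f : Fin n → Set V) : Prop :=
  (∀ i, IsIsoPathSet G (f i)) ∧ (⋃ i, f i) = Set.univ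

def IsIsoPathPartition {n : ℕ} (f : Fin n → Set V) : Prop :=
  (∀ i, IsIsoPathSet G (f i)) ∧ (⋃ i, f i) = Set.univ ∧ Pairwise (Function.onFun Disjoint f)

variable {G}

theorem IsIsoPathPartition.isIsoPathCover {n : ℕ} {f : Fin n → Set V}
    (hf : G.IsIsoPathPartition f) : G.IsIsoPathCover f :=
  ⟨hf.1, hf.2.1⟩

theorem isIsoPathSet_singleton (v : V) : IsIsoPathSet G {v} :=
  ⟨v, v, .nil, .nil, by simp, by ext; simp⟩

theorem isIsoPathPartition_fibers {ι : Type*} {n : ℕ} (π : V → ι) (e : Fin n ≃ ι)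
    (h : ∀ t, IsIsoPathSet G (π ⁻¹' {t})) : G.IsIsoPathPartition fun j => π ⁻¹' {e j} := by
  refine ⟨fun j => h (e j), ?_, fun i j hij => ?_⟩
  · ext v
    simpa using ⟨e.symm (π v), by simp⟩
  · exact (Set.disjoint_singleton.mpr (e.injective.ne hij)).preimage π

theorem ipPartition_le_card_of_fibers {ι : Type*} [Finite ι] (π : V → ι)
    (h : ∀ t, IsIsoPathSet G (π ⁻¹' {t})) : ipPartition G ≤ Nat.card ι :=
  Nat.sInf_le ⟨_, isIsoPathPartition_fibers π (Finite.equivFin ι).symm h⟩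

theorem exists_isIsoPathPartition [Finite V] : ∃ n, ∃ f : Fin n → Set V, G.IsIsoPathPartition f :=
  ⟨_, _, isIsoPathPartition_fibers id (Finite.equivFin V).symm fun v => isIsoPathSet_singleton v⟩

theorem ipCover_le_ipPartition [Finite V] : ipCover G ≤ ipPartition G := by
  obtain ⟨f, hf⟩ : ∃ f, G.IsIsoPathPartition f := Nat.sInf_mem exists_isIsoPathPartition
  exact Nat.sInf_le ⟨f, hf.isIsoPathCover⟩

theorem IsIsoPathSet.ncard_le {s : Set V} {D : ℕ} (hs : IsIsoPathSet G s)
    (hD : ∀ u v, G.dist u v ≤ D) : s.ncard ≤ D + 1 := by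
  classical
  obtain ⟨u, v, p, hp, hlen, rfl⟩ := hs
  have : {x | x ∈ p.support} = (p.support.toFinset : Set V) := by ext; simp
  rw [this, Set.ncard_coe_finset, List.toFinset_card_of_nodup hp.support_nodup,
    Walk.length_support, hlen]
  exact Nat.add_le_add_right (hD u v) 1

theorem IsIsoPathCover.card_le_mul {n D : ℕ} {f : Fin n → Set V} (hf : G.IsIsoPathCover f)
    (hD : ∀ u v, G.dist u v ≤ D) : Nat.card V ≤ n * (D + 1) :=
  calc Nat.card V = (⋃ i, f i).ncard := by rw [hf.2, Set.ncard_univ]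
    _ ≤ ∑ i, (f i).ncard := Set.ncard_iUnion_le_of_fintype f
    _ ≤ ∑ _i : Fin n, (D + 1) := Finset.sum_le_sum fun i _ => (hf.1 i).ncard_le hD
    _ = n * (D + 1) := by simp

theorem card_le_ipCover_mul [Finite V] {D : ℕ} (hD : ∀ u v, G.dist u v ≤ D) :
    Nat.card V ≤ ipCover G * (D + 1) := by
  obtain ⟨n, f₀, hf₀⟩ := exists_isIsoPathPartition (G := G)
  obtain ⟨f, hf⟩ : ∃ f, G.IsIsoPathCover f :=
    Nat.sInf_mem (s := {n | ∃ f : Fin n → Set V, G.IsIsoPathCover f}) ⟨n, f₀, hf₀.isIsoPathCover⟩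
  exact hf.card_le_mul hD

section Grid

theorem pathGraph.mem_support_of_le_of_le {n : ℕ} {u v x : Fin n} (p : (pathGraph n).Walk u v)
    (hux : u ≤ x) (hxv : x ≤ v) : x ∈ p.support := by
  induction p with
  | nil => simp [le_antisymm hux hxv]
  | @cons u w v h p ih =>
    rcases eq_or_lt_of_le hux with rfl | hux
    · simp
    · rw [pathGraph_adj] at h
      exact List.mem_cons_of_mem _ (ih (by rw [Fin.le_iff_val_le_val]; omega) hxv)

theorem pathGraph.exists_walk_length_lt {n : ℕ} (x y : Fin n) :
    ∃ p : (pathGraph n).Walk x y, p.length < n := by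
  obtain ⟨p, hp, -⟩ := (pathGraph_preconnected n x y).exists_path_of_dist
  exact ⟨p, by simpa using hp.length_lt⟩

variable {k : ℕ} {d : Fin k → ℕ}

theorem gridGraph.apply_le_add_one_of_adj {a b : ∀ i, Fin (d i)} (h : (gridGraph d).Adj a b) (i : Fin k) :
    (b i : ℕ) ≤ a i + 1 := by
  obtain ⟨j, hadj, heq⟩ := h
  by_cases hij : i = j
  · subst hij
    rw [pathGraph_adj] at hadj
    omega
  · rw [heq i hij]
    omega

theorem gridGraph.apply_le_add_length {u v : ∀ i, Fin (d i)} (p : (gridGraph d).Walk u v) (i : Fin k) :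
    (v i : ℕ) ≤ u i + p.length := by
  induction p with
  | nil => simp
  | cons h p ih =>
    have := gridGraph.apply_le_add_one_of_adj h i
    rw [Walk.length_cons]
    omega

variable (d) in
def gridGraph.lineHom (a : ∀ i, Fin (d i)) (i : Fin k) : pathGraph (d i) →g gridGraph d where
  toFun := Function.update a i
  map_rel' h := ⟨i, by simpa using h, fun j hj => by simp [Function.update_of_ne hj]⟩

@[simp]
theorem gridGraph.lineHom_apply (a : ∀ i, Fin (d i)) (i : Fin k) (x : Fin (d i)) :
    gridGraph.lineHom d a i x = Function.update a i x :=
  rfl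

theorem gridGraph.lineHom_injective (a : ∀ i, Fin (d i)) (i : Fin k) :
    Function.Injective (gridGraph.lineHom d a i) :=
  Function.update_injective a i

theorem gridGraph.exists_walk_length_le_sum (s : Finset (Fin k)) (u v : ∀ i, Fin (d i))
    (huv : ∀ i ∉ s, u i = v i) :
    ∃ p : (gridGraph d).Walk u v, p.length ≤ ∑ i ∈ s, (d i - 1) := by
  classical
  induction s using Finset.induction_on generalizing u with
  | empty => exact ⟨Walk.nil.copy rfl (funext fun i => huv i (by simp)), by simp⟩
  | @insert a s ha ih =>
    obtain ⟨q, hq⟩ := pathGraph.exists_walk_length_lt (u a) (v a)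
    obtain ⟨p, hp⟩ := ih (Function.update u a (v a)) fun i hi => by
      by_cases hia : i = a
      · subst hia; simp
      · rw [Function.update_of_ne hia]
        exact huv i (by simp [hia, hi])
    obtain ⟨r, hr⟩ : ∃ r : (gridGraph d).Walk u (Function.update u a (v a)), r.length < d a :=
      ⟨(q.map (gridGraph.lineHom d u a)).copy (Function.update_eq_self a u) rfl,
        ((Walk.length_copy _ _ _).trans (Walk.length_map _ _)).trans_lt hq⟩
    refine ⟨r.append p, ?_⟩
    rw [Walk.length_append, Finset.sum_insert ha]
    omega

theorem gridGraph.dist_le_sum (u v : ∀ i, Fin (d i)) :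
    (gridGraph d).dist u v ≤ ∑ i, (d i - 1) := by
  obtain ⟨p, hp⟩ := gridGraph.exists_walk_length_le_sum Finset.univ u v (by simp)
  exact (dist_le p).trans hp

theorem gridGraph.isIsoPathSet_line (a : ∀ i, Fin (d i)) (i : Fin k) :
    IsIsoPathSet (gridGraph d) {v | ∀ j ≠ i, v j = a j} := by
  have hpos : 0 < d i := Fin.pos (a i)
  let bot : Fin (d i) := ⟨0, hpos⟩
  let top : Fin (d i) := ⟨d i - 1, by omega⟩
  obtain ⟨p, hp, -⟩ := (pathGraph_preconnected _ bot top).exists_path_of_dist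
  let f := gridGraph.lineHom d a i
  refine ⟨f bot, f top, p.map f, hp.map (gridGraph.lineHom_injective a i), ?_, ?_⟩
  · obtain ⟨q, hq⟩ := (Reachable.exists_walk_length_eq_dist ⟨p.map f⟩ :)
    have hlt : p.length < d i := by simpa using hp.length_lt
    have hcoord := gridGraph.apply_le_add_length q i
    have hdist := dist_le (p.map f)
    rw [Walk.length_map] at hdist ⊢
    simp only [f, gridGraph.lineHom_apply, Function.update_self, bot, top] at hq hcoord hdist ⊢
    omega
  · ext x
    rw [Set.mem_ofPred_eq, Set.mem_ofPred_eq, Walk.support_map, List.mem_map]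
    simp only [f, gridGraph.lineHom_apply]
    constructor
    · intro hx
      refine ⟨x i, pathGraph.mem_support_of_le_of_le p ?_ ?_, ?_⟩
      · simp [bot, Fin.le_iff_val_le_val]
      · simp only [top, Fin.le_iff_val_le_val]
        omega
      · ext1 j
        by_cases hj : j = i
        · subst hj; simp
        · simp [hj, hx j hj]
    · rintro ⟨y, -, rfl⟩ j hj
      simp [hj]

theorem gridGraph.isIsoPathSet_preimage_tail {k : ℕ} {d : Fin (k + 1) → ℕ} (hd : 0 < d 0)
    (t : ∀ i : Fin k, Fin (d i.succ)) : IsIsoPathSet (gridGraph d) (Fin.tail ⁻¹' {t}) := by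
  convert gridGraph.isIsoPathSet_line (Fin.cons ⟨0, hd⟩ t : ∀ i, Fin (d i)) 0 using 1
  ext v
  simp [Fin.forall_fin_succ, funext_iff, Fin.tail]

end Grid

end SimpleGraph

theorem Nat.le_of_mul_le_mul_add_of_mul_le {a s n c : ℕ} (ha : 0 < a) (hs : s * n ≤ a)
    (h : a * n ≤ c * (a + s)) : n ≤ c := by
  by_contra! hc
  have hs0 : s = 0 := by
    have : (c + 1) * (a + s) ≤ c * (a + s) + a :=
      calc (c + 1) * (a + s) ≤ n * (a + s) := Nat.mul_le_mul_right _ hc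
        _ = a * n + s * n := by ring
        _ ≤ c * (a + s) + a := Nat.add_le_add h hs
    rw [Nat.add_one_mul] at this
    omega
  subst hs0
  exact hc.not_ge (Nat.le_of_mul_le_mul_left (by linarith) ha)

theorem stmt_10 (k : ℕ) (d : Fin (k + 1) → ℕ) (hd : ∀ i, 1 ≤ d i)
    (h1 : (∑ i : Fin k, (d i.succ - 1)) * (∏ i : Fin k, d i.succ) ≤ d 0) :
    ipPartition (gridGraph d) = ∏ i : Fin k, d i.succ ∧
      ipCover (gridGraph d) = ∏ i : Fin k, d i.succ := by
  set N := ∏ i : Fin k, d i.succ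
  set S := ∑ i : Fin k, (d i.succ - 1)
  have hd0 : 0 < d 0 := hd 0
  have hpart : ipPartition (gridGraph d) ≤ N := by
    simpa [Nat.card_pi] using ipPartition_le_card_of_fibers (G := gridGraph d) Fin.tail
      (gridGraph.isIsoPathSet_preimage_tail hd0)
  have hcover : d 0 * N ≤ ipCover (gridGraph d) * (d 0 + S) := by
    have hdiam (u v) : (gridGraph d).dist u v ≤ (d 0 - 1) + S :=
      (gridGraph.dist_le_sum u v).trans_eq (Fin.sum_univ_succ _)
    have hD : d 0 - 1 + S + 1 = d 0 + S := by omega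
    simpa only [Nat.card_pi, Nat.card_fin, Fin.prod_univ_succ, hD] using card_le_ipCover_mul hdiam
  have hN : N ≤ ipCover (gridGraph d) := Nat.le_of_mul_le_mul_add_of_mul_le hd0 h1 hcover
  have hcp := ipCover_le_ipPartition (G := gridGraph d)
  omega
end

section
/- For the two-dimensional grid P_r □ P_s with r ≥ s(s−1), both the isometric path cover number and the isometric path partition number equal s. -/
/-!
The `s` rows of the grid are isometric paths partitioning its vertices, so both numbers are at
most `s`. Conversely, an isometric path has as many vertices as the distance between its ends
plus one, hence at most `r + s - 1` in the grid. If `n < s` isometric paths covered the `r * s`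
vertices, then `r * s ≤ (s - 1) * (r + s - 1)`, i.e. `r ≤ (s - 1) ^ 2`, contradicting
`r ≥ s * (s - 1)`.
-/

open SimpleGraph

namespace SimpleGraph

variable {V W : Type*} {G : SimpleGraph V}

lemma Walk.le_add_length_of_adj {f : V → ℕ} (hf : ∀ a b, G.Adj a b → f b ≤ f a + 1)
    {u v : V} (p : G.Walk u v) : f v ≤ f u + p.length := by
  induction p with
  | nil => simp
  | cons h _ ih =>
    have := hf _ _ h
    rw [Walk.length_cons]
    omega

lemma Reachable.le_add_dist_of_adj {f : V → ℕ} (hf : ∀ a b, G.Adj a b → f b ≤ f a + 1)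
    {u v : V} (h : G.Reachable u v) : f v ≤ f u + G.dist u v := by
  obtain ⟨p, hp⟩ := h.exists_walk_length_eq_dist
  exact hp ▸ p.le_add_length_of_adj hf

lemma dist_lt_card [Fintype V] (u v : V) : G.dist u v < Fintype.card V := by
  by_cases h : G.Reachable u v
  · obtain ⟨p, hp, hlen⟩ := h.exists_path_of_dist
    exact hlen ▸ hp.length_lt
  · rw [dist_eq_zero_of_not_reachable h]
    exact Fintype.card_pos_iff.mpr ⟨u⟩

lemma dist_boxProd_le {H : SimpleGraph W} (x y : V × W) :
    (G □ H).dist x y ≤ G.dist x.1 y.1 + H.dist x.2 y.2 := by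
  by_cases h : (G □ H).Reachable x y
  · obtain ⟨hG, hH⟩ := reachable_boxProd.mp h
    obtain ⟨p, hp⟩ := hG.exists_walk_length_eq_dist
    obtain ⟨q, hq⟩ := hH.exists_walk_length_eq_dist
    calc (G □ H).dist x y ≤ ((p.boxProdLeft H x.2).append (q.boxProdRight G y.1)).length :=
          dist_le _
      _ = G.dist x.1 y.1 + H.dist x.2 y.2 := by
          rw [Walk.length_append]
          exact congrArg₂ (· + ·) ((Walk.length_map _ _).trans hp) ((Walk.length_map _ _).trans hq)
  · rw [dist_eq_zero_of_not_reachable h]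
    exact Nat.zero_le _

end SimpleGraph

section IsometricPaths

variable {V : Type*} {G : SimpleGraph V}

lemma IsIsoPathSet.ncard_le {s : Set V} {D : ℕ} (hD : ∀ u v, G.dist u v ≤ D)
    (hs : IsIsoPathSet G s) : s.ncard ≤ D + 1 := by
  classical
  obtain ⟨u, v, p, hp, hlen, rfl⟩ := hs
  calc {x | x ∈ p.support}.ncard = p.support.toFinset.card := by
        rw [← Set.ncard_coe_finset]
        simp
    _ = G.dist u v + 1 := by
        rw [List.toFinset_card_of_nodup hp.support_nodup, Walk.length_support, hlen]
    _ ≤ D + 1 := Nat.succ_le_succ (hD u v)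

lemma card_le_mul_of_isIsoPathSet_cover {D n : ℕ} (hD : ∀ u v, G.dist u v ≤ D)
    (f : Fin n → Set V) (hf : ∀ i, IsIsoPathSet G (f i)) (hU : ⋃ i, f i = Set.univ) :
    Nat.card V ≤ n * (D + 1) :=
  calc Nat.card V = (⋃ i, f i).ncard := by rw [hU, Set.ncard_univ]
    _ ≤ ∑ i, (f i).ncard := Set.ncard_iUnion_le_of_fintype f
    _ ≤ ∑ _i : Fin n, (D + 1) := Finset.sum_le_sum fun i _ => (hf i).ncard_le hD
    _ = n * (D + 1) := by simp

lemma ipCover_eq_and_ipPartition_eq_of_forall_le {n : ℕ} (f : Fin n → Set V)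
    (hf : ∀ i, IsIsoPathSet G (f i)) (hU : ⋃ i, f i = Set.univ)
    (hdisj : Pairwise (Function.onFun Disjoint f))
    (hmin : ∀ m (g : Fin m → Set V), (∀ i, IsIsoPathSet G (g i)) → ⋃ i, g i = Set.univ → n ≤ m) :
    ipCover G = n ∧ ipPartition G = n :=
  ⟨IsLeast.csInf_eq ⟨⟨f, hf, hU⟩, fun m ⟨g, hg, hgU⟩ => hmin m g hg hgU⟩,
    IsLeast.csInf_eq ⟨⟨f, hf, hU, hdisj⟩, fun m ⟨g, hg, hgU, _⟩ => hmin m g hg hgU⟩⟩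

end IsometricPaths

section Grid

variable {r s : ℕ}

lemma grid_fst_le_add_one_of_adj (a b : Fin r × Fin s) (h : (pathGraph r □ pathGraph s).Adj a b) :
    b.1.val ≤ a.1.val + 1 := by
  rcases h with ⟨h, -⟩ | ⟨-, h⟩
  · rw [pathGraph_adj] at h
    omega
  · rw [h]
    omega

lemma grid_dist_le (x y : Fin r × Fin s) :
    (pathGraph r □ pathGraph s).dist x y ≤ (r - 1) + (s - 1) := by
  have h₁ := (pathGraph r).dist_lt_card x.1 y.1
  have h₂ := (pathGraph s).dist_lt_card x.2 y.2
  have := dist_boxProd_le (G := pathGraph r) (H := pathGraph s) x y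
  rw [Fintype.card_fin] at h₁ h₂
  omega

lemma isIsoPathSet_grid_row (hr : 1 ≤ r) (j : Fin s) :
    IsIsoPathSet (pathGraph r □ pathGraph s) {x | x.2 = j} := by
  set l := List.ofFn fun i : Fin r => (i, j)
  have hne : l ≠ [] := by
    simp only [l, ne_eq, List.ofFn_eq_nil_iff]
    omega
  have hchain : l.IsChain (pathGraph r □ pathGraph s).Adj :=
    List.isChain_ofFn.mpr fun _ _ => by simp [boxProd_adj, pathGraph_adj]
  set p := Walk.ofSupport l hne hchain
  have hsupp : p.support = l := Walk.support_ofSupport hne hchain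
  refine ⟨_, _, p, (Walk.isPath_def p).mpr ?_, le_antisymm ?_ (dist_le p), ?_⟩
  · rw [hsupp, List.nodup_ofFn]
    exact fun a b hab => congrArg Prod.fst hab
  · have := p.reachable.le_add_dist_of_adj (f := fun x => x.1.val) grid_fst_le_add_one_of_adj
    simp only [p, l, Walk.length_ofSupport, List.length_ofFn, List.head_ofFn,
      List.getLast_ofFn] at this ⊢
    omega
  · ext x
    simp [hsupp, l, List.mem_ofFn, Prod.ext_iff, eq_comm]

lemma le_of_isIsoPathSet_grid_cover {n : ℕ} (hr : 1 ≤ r) (h : s * (s - 1) ≤ r)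
    (f : Fin n → Set (Fin r × Fin s))
    (hf : ∀ i, IsIsoPathSet (pathGraph r □ pathGraph s) (f i)) (hU : ⋃ i, f i = Set.univ) :
    s ≤ n := by
  have hcard := card_le_mul_of_isIsoPathSet_cover grid_dist_le f hf hU
  rw [Nat.card_eq_fintype_card, Fintype.card_prod, Fintype.card_fin, Fintype.card_fin] at hcard
  by_contra! hn
  obtain ⟨t, rfl⟩ : ∃ t, s = t + 1 := ⟨s - 1, by omega⟩
  rw [show r - 1 + (t + 1 - 1) + 1 = r + t by omega] at hcard
  rw [Nat.add_sub_cancel] at h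
  nlinarith [Nat.mul_le_mul_right (r + t) (Nat.lt_succ_iff.mp hn)]

end Grid

theorem stmt_11_general (r s : ℕ) (hr : 1 ≤ r) (h : s * (s - 1) ≤ r) :
    ipCover (pathGraph r □ pathGraph s) = s ∧
      ipPartition (pathGraph r □ pathGraph s) = s :=
  ipCover_eq_and_ipPartition_eq_of_forall_le (fun j => {x | x.2 = j})
    (isIsoPathSet_grid_row hr) (Set.iUnion_eq_univ_iff.mpr fun x => ⟨x.2, rfl⟩)
    (fun _ _ hij => Set.disjoint_left.mpr fun _ hi hj => hij (hi.symm.trans hj))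
    (fun _ g hg hgU => le_of_isIsoPathSet_grid_cover hr h g hg hgU)

theorem stmt_11 (r s : ℕ) (hr : 1 ≤ r) (hs : 1 ≤ s) (h : s * (s - 1) ≤ r) :
    ipCover (pathGraph r □ pathGraph s) = s ∧
      ipPartition (pathGraph r □ pathGraph s) = s :=
  stmt_11_general r s hr h
end
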